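/- arXiv:1201.6152 — 2 statements merged into one kernel-verified Lean document; each statement's English description precedes it below -/
import Mathlib

section
/- For every positive integer n, the following identity of rational functions in q holds: ∑_{k=1}^{n} ( (-1)^k (1 + 3q^k + q^{2k}) · q^{−C(k,2)} / ((1+q^k) · [k]_q^2) ) · binom_q(2k, k) = ∑_{k=1}^{n} ( (-1)^k (1+q^k) · q^{−C(k,2)} / [k]_q^2 ) · binom_q(n+k, k) · binom_q(n, k)^{−1} − ∑_{k=1}^{n} q^k / [k]_q^2. -/
/-!
Write `D(m, k) = binom_q(m+k, k) / binom_q(m, k)`, so that `binom_q(2k, k) = D(k, k)`, and induct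
on `n`. Since `D(n+1, k) - D(n, k) = -q^(n+1-k) (1-q^k)² D(n, k) / (1-q^(n+1))²`, the factor
`(1-q^k)²` cancels `[k]_q²`, and the right-hand sum grows by its new term minus
`q^(n+1)/[n+1]_q²` times `∑_{k=1}^{n} c_k D(n, k)` with `c_k = (-1)^k (1+q^k) q^(-k-C(k,2))`.
That sum telescopes: `(1 + ∑_{k=1}^{j} c_k D(m, k)) (1-q^(m+1)) = (-1)^j q^(-C(j+1,2)) D(m, j)
(1-q^(m+j+1))`, and at `j = m = n` the increment is exactly the new left-hand term, because
`(1+Q)² + Q = 1 + 3Q + Q²` for `Q = q^(n+1)`.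
-/

open Polynomial Finset

noncomputable section

/-- The `q`-integer `[n]_q = 1 + q + ⋯ + q^(n-1)`, as a polynomial in `ℚ[q]`. -/
def qIntP (n : ℕ) : Polynomial ℚ := ∑ i ∈ Finset.range n, X ^ i

/-- The `q`-integer `[n]_q` viewed in the field of rational functions `ℚ(q)`. -/
def qN (n : ℕ) : RatFunc ℚ := algebraMap (Polynomial ℚ) (RatFunc ℚ) (qIntP n)

/-- The `q`-Pochhammer symbol `(q; q)_n = ∏_{j=1}^{n} (1 - q^j)` in `ℚ(q)`. -/
def qqPoch (n : ℕ) : RatFunc ℚ :=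
  algebraMap (Polynomial ℚ) (RatFunc ℚ) (∏ j ∈ Finset.range n, (1 - X ^ (j + 1)))

/-- The `q`-Pochhammer symbol `(-q; q)_n = ∏_{j=1}^{n} (1 + q^j)` in `ℚ(q)`. -/
def nqPoch (n : ℕ) : RatFunc ℚ :=
  algebraMap (Polynomial ℚ) (RatFunc ℚ) (∏ j ∈ Finset.range n, (1 + X ^ (j + 1)))

/-- The Gaussian `q`-binomial coefficient, as a rational function. -/
def qbin (n k : ℕ) : RatFunc ℚ :=
  if k ≤ n then qqPoch n / (qqPoch k * qqPoch (n - k)) else 0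

/-- `qCong p r x y` means `x ≡ y (mod [p]_q^r)`: the difference `x - y` can be
written as a fraction whose numerator (a polynomial) is divisible by `[p]_q^r`
and whose denominator is relatively prime to `[p]_q`. -/
def qCong (p r : ℕ) (x y : RatFunc ℚ) : Prop :=
  ∃ a b : Polynomial ℚ, IsCoprime b (qIntP p) ∧
    (x - y) * algebraMap (Polynomial ℚ) (RatFunc ℚ) b =
      algebraMap (Polynomial ℚ) (RatFunc ℚ) (qIntP p ^ r * a)

namespace QAnalog

variable {K : Type*} [Field K] {q : K}

def qPoch (q : K) (n : ℕ) : K := ∏ j ∈ range n, (1 - q ^ (j + 1))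

def qInt (q : K) (n : ℕ) : K := ∑ i ∈ range n, q ^ i

/-- `(q;q)_{m+k} (q;q)_{m-k} / (q;q)_m²`, which is `binom_q(m+k, k) / binom_q(m, k)` when
`k ≤ m` (for `k > m` the truncated `m - k` makes it meaningless). -/
def qBinomRatio (q : K) (m k : ℕ) : K := qPoch q (m + k) * qPoch q (m - k) / qPoch q m ^ 2

lemma one_sub_pow_ne_zero (hq : ∀ j ≠ 0, q ^ j ≠ 1) {j : ℕ} (hj : j ≠ 0) : 1 - q ^ j ≠ 0 :=
  sub_ne_zero.mpr (hq j hj).symm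

lemma qPoch_succ (n : ℕ) : qPoch q (n + 1) = qPoch q n * (1 - q ^ (n + 1)) :=
  prod_range_succ _ n

lemma qPoch_ne_zero (hq : ∀ j ≠ 0, q ^ j ≠ 1) (n : ℕ) : qPoch q n ≠ 0 :=
  prod_ne_zero_iff.mpr fun j _ ↦ one_sub_pow_ne_zero hq j.succ_ne_zero

lemma qInt_eq_div (hq : q ≠ 1) (n : ℕ) : qInt q n = (1 - q ^ n) / (1 - q) := by
  rw [eq_div_iff (sub_ne_zero.mpr hq.symm)]
  exact geom_sum_mul_neg q n

lemma qBinomRatio_zero (hq : ∀ j ≠ 0, q ^ j ≠ 1) (m : ℕ) : qBinomRatio q m 0 = 1 := by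
  rw [qBinomRatio, add_zero, Nat.sub_zero, ← sq]
  exact div_self (pow_ne_zero 2 (qPoch_ne_zero hq m))

lemma qBinomRatio_succ_right_mul {m k : ℕ} (hk : k < m) :
    qBinomRatio q m (k + 1) * (1 - q ^ (m - k)) = qBinomRatio q m k * (1 - q ^ (m + k + 1)) := by
  obtain ⟨t, rfl⟩ : ∃ t, m = k + 1 + t := ⟨m - (k + 1), by omega⟩
  simp only [qBinomRatio, show k + 1 + t + (k + 1) = k + 1 + t + k + 1 by omega,
    show k + 1 + t - k = k + 1 + t - (k + 1) + 1 by omega, qPoch_succ]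
  ring

lemma qBinomRatio_succ_left_mul (hq : ∀ j ≠ 0, q ^ j ≠ 1) {m k : ℕ} (hk : k ≤ m) :
    qBinomRatio q (m + 1) k * (1 - q ^ (m + 1)) ^ 2
      = qBinomRatio q m k * (1 - q ^ (m + k + 1)) * (1 - q ^ (m + 1 - k)) := by
  have hm := one_sub_pow_ne_zero hq m.succ_ne_zero
  have hP := qPoch_ne_zero hq m
  simp only [qBinomRatio, show m + 1 + k = m + k + 1 by omega,
    show m + 1 - k = m - k + 1 by omega, qPoch_succ]
  field_simp

lemma qBinomRatio_succ_self_mul (hq : ∀ j ≠ 0, q ^ j ≠ 1) (m : ℕ) :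
    qBinomRatio q (m + 1) (m + 1) * (1 - q ^ (m + 1)) ^ 2
      = qBinomRatio q m m * (1 - q ^ (2 * m + 1)) * (1 - q ^ (2 * m + 2)) := by
  have hm := one_sub_pow_ne_zero hq m.succ_ne_zero
  have hP := qPoch_ne_zero hq m
  simp only [qBinomRatio, Nat.sub_self, show m + 1 + (m + 1) = 2 * m + 1 + 1 by omega,
    show m + m = 2 * m by omega, qPoch_succ]
  field_simp

lemma one_add_sum_qBinomRatio_mul (hq0 : q ≠ 0) (hq : ∀ j ≠ 0, q ^ j ≠ 1) {m j : ℕ}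
    (hj : j ≤ m) :
    (1 + ∑ k ∈ Icc 1 j, (-1) ^ k * (1 + q ^ k) * (q ^ (k + k.choose 2))⁻¹ * qBinomRatio q m k)
        * (1 - q ^ (m + 1))
      = (-1) ^ j * (q ^ (j + 1).choose 2)⁻¹ * qBinomRatio q m j * (1 - q ^ (m + j + 1)) := by
  induction j with
  | zero => simp [qBinomRatio_zero hq]
  | succ j ih =>
    obtain ⟨t, rfl⟩ : ∃ t, m = j + 1 + t := ⟨m - (j + 1), by omega⟩
    have hstep := qBinomRatio_succ_right_mul (q := q) (show j < j + 1 + t by omega)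
    rw [show j + 1 + t - j = t + 1 by omega] at hstep
    have hchoose : (j + 1 + 1).choose 2 = j + 1 + (j + 1).choose 2 := by
      rw [Nat.choose_succ_succ', Nat.choose_one_right]
    rw [sum_Icc_succ_top (by omega), ← add_assoc, add_mul, ih (by omega), hchoose,
      mul_assoc _ (qBinomRatio q _ j), ← hstep]
    field_simp
    ring

lemma mul_qBinomRatio_succ_left_sub (hq0 : q ≠ 0) (hq : ∀ j ≠ 0, q ^ j ≠ 1) {n k : ℕ}
    (hk : k ∈ Icc 1 n) :
    (-1) ^ k * (1 + q ^ k) * (q ^ k.choose 2)⁻¹ / qInt q k ^ 2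
        * (qBinomRatio q (n + 1) k - qBinomRatio q n k)
      = -(q ^ (n + 1) / qInt q (n + 1) ^ 2)
        * ((-1) ^ k * (1 + q ^ k) * (q ^ (k + k.choose 2))⁻¹ * qBinomRatio q n k) := by
  obtain ⟨hk1, hkn⟩ := mem_Icc.mp hk
  obtain ⟨s, rfl⟩ : ∃ s, n = k + s := ⟨n - k, by omega⟩
  have hsucc := qBinomRatio_succ_left_mul hq (show k ≤ k + s by omega)
  rw [show k + s + 1 - k = s + 1 by omega] at hsucc
  have hn := one_sub_pow_ne_zero hq (Nat.add_one_ne_zero (k + s))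
  have hk0 := one_sub_pow_ne_zero hq (show k ≠ 0 by omega)
  have hq1 : q ≠ 1 := by simpa using hq 1 one_ne_zero
  rw [eq_div_of_mul_eq (pow_ne_zero 2 hn) hsucc]
  simp only [qInt_eq_div hq1]
  field_simp
  ring

lemma sum_Icc_qBinomRatio_succ (hq0 : q ≠ 0) (hq : ∀ j ≠ 0, q ^ j ≠ 1) (n : ℕ) :
    ∑ k ∈ Icc 1 (n + 1), (-1) ^ k * (1 + q ^ k) * (q ^ k.choose 2)⁻¹ / qInt q k ^ 2
        * qBinomRatio q (n + 1) k
      = ∑ k ∈ Icc 1 n, (-1) ^ k * (1 + q ^ k) * (q ^ k.choose 2)⁻¹ / qInt q k ^ 2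
          * qBinomRatio q n k
        + (-1) ^ (n + 1) * (1 + q ^ (n + 1)) * (q ^ (n + 1).choose 2)⁻¹ / qInt q (n + 1) ^ 2
          * qBinomRatio q (n + 1) (n + 1)
        - q ^ (n + 1) / qInt q (n + 1) ^ 2 * ∑ k ∈ Icc 1 n,
          (-1) ^ k * (1 + q ^ k) * (q ^ (k + k.choose 2))⁻¹ * qBinomRatio q n k := by
  have hdiff := sum_congr rfl fun k hk ↦ mul_qBinomRatio_succ_left_sub hq0 hq (n := n) (k := k) hk
  simp only [mul_sub, sum_sub_distrib, ← mul_sum] at hdiff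
  rw [sum_Icc_succ_top (by omega)]
  linear_combination hdiff

lemma central_term_succ (hq0 : q ≠ 0) (hq : ∀ j ≠ 0, q ^ j ≠ 1) (n : ℕ) :
    (-1) ^ (n + 1) * (1 + 3 * q ^ (n + 1) + q ^ (2 * (n + 1))) * (q ^ (n + 1).choose 2)⁻¹
        / ((1 + q ^ (n + 1)) * qInt q (n + 1) ^ 2) * qBinomRatio q (n + 1) (n + 1)
      = (-1) ^ (n + 1) * (1 + q ^ (n + 1)) * (q ^ (n + 1).choose 2)⁻¹ / qInt q (n + 1) ^ 2
          * qBinomRatio q (n + 1) (n + 1)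
        - q ^ (n + 1) / qInt q (n + 1) ^ 2 * (1 + ∑ k ∈ Icc 1 n,
          (-1) ^ k * (1 + q ^ k) * (q ^ (k + k.choose 2))⁻¹ * qBinomRatio q n k) := by
  have hn := one_sub_pow_ne_zero hq (Nat.add_one_ne_zero n)
  have h2n := one_sub_pow_ne_zero hq (show 2 * n + 2 ≠ 0 by omega)
  have hq1 : q ≠ 1 := by simpa using hq 1 one_ne_zero
  have hplus : 1 + q ^ (n + 1) ≠ 0 := fun h ↦ h2n (by linear_combination (1 - q ^ (n + 1)) * h)
  rw [eq_div_of_mul_eq hn (one_add_sum_qBinomRatio_mul hq0 hq le_rfl),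
    eq_div_of_mul_eq (pow_ne_zero 2 hn) (qBinomRatio_succ_self_mul hq n)]
  simp only [qInt_eq_div hq1]
  field_simp
  ring

theorem sum_central_term_eq (hq0 : q ≠ 0) (hq : ∀ j ≠ 0, q ^ j ≠ 1) (n : ℕ) :
    ∑ k ∈ Icc 1 n, (-1) ^ k * (1 + 3 * q ^ k + q ^ (2 * k)) * (q ^ k.choose 2)⁻¹
        / ((1 + q ^ k) * qInt q k ^ 2) * qBinomRatio q k k
      = ∑ k ∈ Icc 1 n, (-1) ^ k * (1 + q ^ k) * (q ^ k.choose 2)⁻¹ / qInt q k ^ 2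
          * qBinomRatio q n k
        - ∑ k ∈ Icc 1 n, q ^ k / qInt q k ^ 2 := by
  induction n with
  | zero => simp
  | succ n ih =>
    rw [sum_Icc_qBinomRatio_succ hq0 hq, sum_Icc_succ_top (by omega), sum_Icc_succ_top (by omega),
      ih, central_term_succ hq0 hq]
    ring

end QAnalog

open QAnalog

lemma RatFunc.X_pow_ne_one {F : Type*} [Field F] {j : ℕ} (hj : j ≠ 0) :
    (RatFunc.X : RatFunc F) ^ j ≠ 1 := fun h ↦
  (RatFunc.transcendental_X.pow (Nat.pos_of_ne_zero hj)) (h ▸ isAlgebraic_one (R := F))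

lemma qqPoch_eq_qPoch (n : ℕ) : qqPoch n = qPoch RatFunc.X n := by
  simp [qqPoch, qPoch, RatFunc.algebraMap_X]

lemma qN_eq_qInt (n : ℕ) : qN n = qInt RatFunc.X n := by
  simp [qN, qIntP, qInt, RatFunc.algebraMap_X]

lemma qbin_two_mul_self (k : ℕ) : qbin (2 * k) k = qBinomRatio RatFunc.X k k := by
  simp [qbin, qBinomRatio, qqPoch_eq_qPoch, qPoch, two_mul, sq]

lemma qbin_add_mul_inv_qbin {n k : ℕ} (hk : k ≤ n) :
    qbin (n + k) k * (qbin n k)⁻¹ = qBinomRatio RatFunc.X n k := by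
  have hP := qPoch_ne_zero (fun j hj ↦ RatFunc.X_pow_ne_one (F := ℚ) hj)
  have := hP k
  have := hP n
  simp only [qbin, if_pos hk, if_pos (Nat.le_add_left k n), Nat.add_sub_cancel, qBinomRatio,
    qqPoch_eq_qPoch]
  field_simp

theorem qid4_general (n : ℕ) :
    ∑ k ∈ Finset.Icc 1 n,
        (-1 : RatFunc ℚ) ^ k * (1 + 3 * RatFunc.X ^ k + RatFunc.X ^ (2 * k)) *
          (RatFunc.X : RatFunc ℚ) ^ (-(k.choose 2 : ℤ)) /
            ((1 + RatFunc.X ^ k) * qN k ^ 2) * qbin (2 * k) k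
      = ∑ k ∈ Finset.Icc 1 n,
          (-1 : RatFunc ℚ) ^ k * (1 + RatFunc.X ^ k) *
            (RatFunc.X : RatFunc ℚ) ^ (-(k.choose 2 : ℤ)) / qN k ^ 2 *
              qbin (n + k) k * (qbin n k)⁻¹
        - ∑ k ∈ Finset.Icc 1 n, (RatFunc.X : RatFunc ℚ) ^ k / qN k ^ 2 := by
  have hratio : ∀ k ∈ Icc 1 n, qbin (n + k) k * (qbin n k)⁻¹ = qBinomRatio RatFunc.X n k :=
    fun k hk ↦ qbin_add_mul_inv_qbin (mem_Icc.mp hk).2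
  simp only [zpow_neg, zpow_natCast, qN_eq_qInt, qbin_two_mul_self, mul_assoc _ (qbin (n + _) _)]
  rw [sum_congr rfl fun k hk ↦ congrArg _ (hratio k hk)]
  exact sum_central_term_eq RatFunc.X_ne_zero (fun j hj ↦ RatFunc.X_pow_ne_one hj) n

/-- For every positive integer `n`, the identity of rational functions:
`∑_{k=1}^{n} ((-1)^k (1+3q^k+q^{2k}) q^{−C(k,2)}/((1+q^k) [k]_q²)) binom_q(2k,k)
  = ∑_{k=1}^{n} ((-1)^k (1+q^k) q^{−C(k,2)}/[k]_q²) binom_q(n+k,k) binom_q(n,k)⁻¹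
    − ∑_{k=1}^{n} q^k/[k]_q²`. -/
theorem qid4 (n : ℕ) (hn : 0 < n) :
    ∑ k ∈ Finset.Icc 1 n,
        (-1 : RatFunc ℚ) ^ k * (1 + 3 * RatFunc.X ^ k + RatFunc.X ^ (2 * k)) *
          (RatFunc.X : RatFunc ℚ) ^ (-(k.choose 2 : ℤ)) /
            ((1 + RatFunc.X ^ k) * qN k ^ 2) * qbin (2 * k) k
      = ∑ k ∈ Finset.Icc 1 n,
          (-1 : RatFunc ℚ) ^ k * (1 + RatFunc.X ^ k) *
            (RatFunc.X : RatFunc ℚ) ^ (-(k.choose 2 : ℤ)) / qN k ^ 2 *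
              qbin (n + k) k * (qbin n k)⁻¹
        - ∑ k ∈ Finset.Icc 1 n, (RatFunc.X : RatFunc ℚ) ^ k / qN k ^ 2 :=
  qid4_general n
end
end

section
/- For every positive integer n, the following identity of rational numbers holds: (3/4) · ∑_{k=1}^{n} (1/k) · C(2k, k) = ∑_{k=1}^{n} (1/k) · C(n+k, k) · C(n, k)^{−1} − (1/2) · ∑_{k=1}^{n} 1/k. -/
/-!
Put `r n k = C(n+k,k) / C(n,k)` and `S n = ∑_{k=1}^n r n k / k`. From
`r (n+1) k = r n k * (1 - k² / (n+1)²)` one gets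
`S (n+1) - S n = r (n+1) (n+1) / (n+1) - ∑_{k ≤ n} k r n k / (n+1)²`, and the weighted sum
telescopes because `(n + 1 - k) r n k` has forward difference `2 k r n k` in `k`. With
`r n n = C(2n,n)` this gives `S (n+1) - S n = (3/4 C(2n+2,n+1) + 1/2) / (n+1)`, so both sides of
the identity have the same increments.
-/

open Finset

def chooseRatio (n k : ℕ) : ℚ := ((n + k).choose k : ℚ) / n.choose k

lemma chooseRatio_zero (n : ℕ) : chooseRatio n 0 = 1 := by
  simp [chooseRatio]

lemma chooseRatio_self (n : ℕ) : chooseRatio n n = n.centralBinom := by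
  simp [chooseRatio, Nat.centralBinom_eq_two_mul_choose, two_mul]

lemma chooseRatio_succ_right {n k : ℕ} (hk : k < n) :
    chooseRatio n (k + 1) * (n - k) = chooseRatio n k * (n + k + 1) := by
  have hnum : ((n + k + 1).choose (k + 1) : ℚ) * (k + 1) = (n + k + 1) * (n + k).choose k := by
    exact_mod_cast (Nat.add_one_mul_choose_eq (n + k) k).symm
  have hden : (n.choose (k + 1) : ℚ) * (k + 1) = n.choose k * (n - k) := by
    rw [← Nat.cast_sub hk.le]; exact_mod_cast Nat.choose_succ_right_eq n k
  have h0 : (n.choose k : ℚ) ≠ 0 := by exact_mod_cast (Nat.choose_pos hk.le).ne'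
  have h1 : (n.choose (k + 1) : ℚ) ≠ 0 := by exact_mod_cast (Nat.choose_pos hk).ne'
  rw [chooseRatio, chooseRatio, div_mul_eq_mul_div, div_mul_eq_mul_div, div_eq_div_iff h1 h0,
    ← add_assoc]
  linear_combination (n.choose (k + 1) : ℚ) * hnum - ((n + k + 1).choose (k + 1) : ℚ) * hden

lemma chooseRatio_succ_left {n k : ℕ} (hk : k ≤ n) :
    chooseRatio (n + 1) k * (n + 1) ^ 2 = chooseRatio n k * ((n + 1) ^ 2 - k ^ 2) := by
  have hnum : ((n + k).choose k : ℚ) * (n + 1 + k) = (n + 1 + k).choose k * (n + 1) := by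
    have h := Nat.choose_mul_succ_eq (n + k) k
    rw [show n + k + 1 - k = n + 1 by omega, add_right_comm n k 1] at h
    exact_mod_cast h
  have hden : (n.choose k : ℚ) * (n + 1) = (n + 1).choose k * (n + 1 - k) := by
    have h := congrArg (Nat.cast : ℕ → ℚ) (Nat.choose_mul_succ_eq n k)
    push_cast [Nat.cast_sub (by omega : k ≤ n + 1)] at h
    exact h
  have h0 : (n.choose k : ℚ) ≠ 0 := by exact_mod_cast (Nat.choose_pos hk).ne'
  have h1 : ((n + 1).choose k : ℚ) ≠ 0 := by exact_mod_cast (Nat.choose_pos (by omega)).ne'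
  rw [chooseRatio, chooseRatio, div_mul_eq_mul_div, div_mul_eq_mul_div, div_eq_div_iff h1 h0]
  linear_combination ((n + 1 + k).choose k * (n + 1) : ℚ) * hden
    - ((n + 1).choose k * (n + 1 - k) : ℚ) * hnum

lemma sum_range_two_mul_mul_chooseRatio (n : ℕ) :
    ∑ k ∈ range (n + 1), 2 * k * chooseRatio n k = (2 * n + 1) * n.centralBinom - (n + 1) := by
  have hstep : ∀ k ∈ range n, 2 * k * chooseRatio n k
      = (n + 1 - (k + 1 : ℕ)) * chooseRatio n (k + 1) - (n + 1 - k) * chooseRatio n k := by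
    intro k hk
    have h := chooseRatio_succ_right (mem_range.mp hk)
    push_cast
    linear_combination -h
  rw [sum_range_succ, sum_congr rfl hstep,
    sum_range_sub (fun k => (n + 1 - k : ℚ) * chooseRatio n k), chooseRatio_zero, chooseRatio_self]
  ring

lemma sum_Icc_two_mul_mul_chooseRatio (n : ℕ) :
    ∑ k ∈ Icc 1 n, 2 * k * chooseRatio n k = (2 * n + 1) * n.centralBinom - (n + 1) := by
  rw [← sum_range_two_mul_mul_chooseRatio, range_eq_Ico,
    sum_eq_sum_Ico_succ_bot (by omega : 0 < n + 1), Ico_add_one_right_eq_Icc]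
  simp

def chooseRatioSum (n : ℕ) : ℚ := ∑ k ∈ Icc 1 n, chooseRatio n k / k

lemma chooseRatioSum_succ (n : ℕ) :
    chooseRatioSum (n + 1)
      = chooseRatioSum n + (3 / 4 * (n + 1).centralBinom + 1 / 2) / (n + 1 : ℕ) := by
  have hterm : ∀ k ∈ Icc 1 n, chooseRatio (n + 1) k / k
      = chooseRatio n k / k - 2 * k * chooseRatio n k / (2 * (n + 1) ^ 2) := by
    intro k hk
    obtain ⟨hk1, hkn⟩ := mem_Icc.mp hk
    have h := chooseRatio_succ_left hkn
    have hk0 : (k : ℚ) ≠ 0 := Nat.cast_ne_zero.mpr (by omega)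
    field_simp
    linear_combination h
  have hcentral : ((n + 1) * (n + 1).centralBinom : ℚ) = 2 * (2 * n + 1) * n.centralBinom := by
    exact_mod_cast Nat.succ_mul_centralBinom_succ n
  rw [chooseRatioSum, sum_Icc_succ_top (by omega), sum_congr rfl hterm, sum_sub_distrib,
    ← sum_div, sum_Icc_two_mul_mul_chooseRatio, chooseRatio_self, ← chooseRatioSum]
  push_cast
  field_simp
  linear_combination 2 * hcentral

lemma chooseRatioSum_eq (n : ℕ) :
    chooseRatioSum n = ∑ k ∈ Icc 1 n, (3 / 4 * k.centralBinom + 1 / 2 : ℚ) / k := by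
  induction n with
  | zero => simp [chooseRatioSum]
  | succ n ih => rw [chooseRatioSum_succ, ih, sum_Icc_succ_top (by omega)]

theorem central_binomial_identity_general (n : ℕ) :
    (3 / 4 : ℚ) * ∑ k ∈ Finset.Icc 1 n, (1 / (k : ℚ)) * ((2 * k).choose k : ℚ)
      = ∑ k ∈ Finset.Icc 1 n,
          (1 / (k : ℚ)) * ((n + k).choose k : ℚ) * ((n.choose k : ℚ))⁻¹
        - (1 / 2 : ℚ) * ∑ k ∈ Finset.Icc 1 n, (1 / (k : ℚ)) := by
  have hratio : ∑ k ∈ Icc 1 n, (1 / (k : ℚ)) * ((n + k).choose k : ℚ) * ((n.choose k : ℚ))⁻¹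
      = chooseRatioSum n :=
    sum_congr rfl fun k _ => by rw [chooseRatio, div_eq_mul_inv]; ring
  rw [hratio, chooseRatioSum_eq, eq_sub_iff_add_eq, mul_sum, mul_sum, ← sum_add_distrib]
  refine sum_congr rfl fun k _ => ?_
  rw [Nat.centralBinom_eq_two_mul_choose k]
  ring

/-- For every positive integer `n`, the rational-number identity:
`(3/4) ∑_{k=1}^{n} (1/k) C(2k,k)
  = ∑_{k=1}^{n} (1/k) C(n+k,k) C(n,k)⁻¹ − (1/2) ∑_{k=1}^{n} 1/k`. -/
theorem central_binomial_identity (n : ℕ) (hn : 0 < n) :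
    (3 / 4 : ℚ) * ∑ k ∈ Finset.Icc 1 n, (1 / (k : ℚ)) * ((2 * k).choose k : ℚ)
      = ∑ k ∈ Finset.Icc 1 n,
          (1 / (k : ℚ)) * ((n + k).choose k : ℚ) * ((n.choose k : ℚ))⁻¹
        - (1 / 2 : ℚ) * ∑ k ∈ Finset.Icc 1 n, (1 / (k : ℚ)) :=
  central_binomial_identity_general n
end
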